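/- arXiv:2103.08655 — 2 statements merged into one kernel-verified Lean document; each statement's English description precedes it below -/
import Mathlib

section
/- Given pastures P, P₁, P₂ and morphisms of pastures f₁ : P → P₁ and f₂ : P → P₂, the fibered coproduct P₁ ⊗_P P₂ with the maps i₁ and i₂ satisfies the universal property of the fibered coproduct: if P' is a pasture and g₁ : P₁ → P', g₂ : P₂ → P' are morphisms of pastures with g₁ ∘ f₁ = g₂ ∘ f₂, then there is a unique morphism of pastures g : P₁ ⊗_P P₂ → P' with g ∘ i₁ = g₁ and g ∘ i₂ = g₂; explicitly, g([(a,b)]) = g₁(a)g₂(b). -/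
/-! The lift `[(a,b)] ↦ g₁ a · g₂ b` is well defined because `g₁ ∘ f₁ = g₂ ∘ f₂` lets the unit
`f₁ z` relating two representatives be moved from the first factor to the second; it is unique
because every class `[(a,b)]` is the product `i₁ a · i₂ b`. -/

universe u v w

/-- A pasture structure on a type `P`: a multiplication, a zero, a one,
an involution `neg`, and a ternary nullset relation `null a b c`
(meaning "`a + b + c = 0`"). -/
structure PastureStr (P : Type u) where
  mul : P → P → P
  zero : P
  one : P
  neg : P → P
  null : P → P → P → Prop

/-- `P` together with a `PastureStr` is a pasture: `P` is a commutative
monoid with zero whose nonzero elements form an abelian group, `neg` is an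
involution fixing `0`, and the nullset is invariant under permutations,
invariant under multiplication, and satisfies `a + b + 0 = 0 ↔ a = -b`. -/
structure PastureStr.IsPasture {P : Type u} (S : PastureStr P) : Prop where
  mul_comm : ∀ a b : P, S.mul a b = S.mul b a
  mul_assoc : ∀ a b c : P, S.mul (S.mul a b) c = S.mul a (S.mul b c)
  one_mul : ∀ a : P, S.mul S.one a = a
  zero_mul : ∀ a : P, S.mul S.zero a = S.zero
  one_ne_zero : S.one ≠ S.zero
  mul_ne_zero : ∀ a b : P, a ≠ S.zero → b ≠ S.zero → S.mul a b ≠ S.zero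
  exists_inv : ∀ a : P, a ≠ S.zero → ∃ b : P, S.mul a b = S.one
  neg_neg : ∀ a : P, S.neg (S.neg a) = a
  neg_zero : S.neg S.zero = S.zero
  null_swap_left : ∀ a b c : P, S.null a b c → S.null b a c
  null_swap_right : ∀ a b c : P, S.null a b c → S.null a c b
  null_mul : ∀ d a b c : P, S.null a b c → S.null (S.mul d a) (S.mul d b) (S.mul d c)
  null_zero : ∀ a b : P, S.null a b S.zero ↔ a = S.neg b

/-- A morphism of pastures: a multiplicative map preserving `0`, `1`,
the involution and the nullset. -/
structure PastureStr.IsHom {P : Type u} {P' : Type v} (S : PastureStr P) (T : PastureStr P')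
    (f : P → P') : Prop where
  map_mul : ∀ a b : P, f (S.mul a b) = T.mul (f a) (f b)
  map_zero : f S.zero = T.zero
  map_one : f S.one = T.one
  map_neg : ∀ a : P, f (S.neg a) = T.neg (f a)
  map_null : ∀ a b c : P, S.null a b c → T.null (f a) (f b) (f c)

variable {P P₁ P₂ : Type u}

/-- The equivalence relation defining the fibered coproduct `P₁ ⊗_P P₂`:
`(a,b) ∼ (c,d)` iff both pairs contain a zero entry, or
`(c,d) = (f₁(x)⁻¹ a, f₂(x) b)` for some `x ∈ P^×` (expressed here as
`f₁(x) · c = a` and `d = f₂(x) · b`). -/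
def tensorRel (S : PastureStr P) (S₁ : PastureStr P₁) (S₂ : PastureStr P₂)
    (f₁ : P → P₁) (f₂ : P → P₂) : P₁ × P₂ → P₁ × P₂ → Prop := fun x y =>
  ((x.1 = S₁.zero ∨ x.2 = S₂.zero) ∧ (y.1 = S₁.zero ∨ y.2 = S₂.zero)) ∨
    ∃ z : P, z ≠ S.zero ∧ S₁.mul (f₁ z) y.1 = x.1 ∧ y.2 = S₂.mul (f₂ z) x.2

/-- The underlying set of the fibered coproduct `P₁ ⊗_P P₂`: the quotient of
the Cartesian product `P₁ × P₂` by the relation `tensorRel`. -/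
def TensorCarrier (S : PastureStr P) (S₁ : PastureStr P₁) (S₂ : PastureStr P₂)
    (f₁ : P → P₁) (f₂ : P → P₂) : Type u :=
  Quot (tensorRel S S₁ S₂ f₁ f₂)

/-- The nullset of the fibered coproduct `P₁ ⊗_P P₂`:
`[(a,y)] + [(b,y)] + [(c,y)] = 0` whenever `a + b + c = 0` in `P₁` and
`y ∈ P₂`, and `[(x,a)] + [(x,b)] + [(x,c)] = 0` whenever `a + b + c = 0` in
`P₂` and `x ∈ P₁`. -/
def tensorNull (S : PastureStr P) (S₁ : PastureStr P₁) (S₂ : PastureStr P₂)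
    (f₁ : P → P₁) (f₂ : P → P₂) (u v w : TensorCarrier S S₁ S₂ f₁ f₂) : Prop :=
  (∃ a b c y, S₁.null a b c ∧
      u = Quot.mk (tensorRel S S₁ S₂ f₁ f₂) (a, y) ∧
      v = Quot.mk (tensorRel S S₁ S₂ f₁ f₂) (b, y) ∧
      w = Quot.mk (tensorRel S S₁ S₂ f₁ f₂) (c, y)) ∨
  (∃ x a b c, S₂.null a b c ∧
      u = Quot.mk (tensorRel S S₁ S₂ f₁ f₂) (x, a) ∧
      v = Quot.mk (tensorRel S S₁ S₂ f₁ f₂) (x, b) ∧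
      w = Quot.mk (tensorRel S S₁ S₂ f₁ f₂) (x, c))

/-- A pasture structure `SQ` on the quotient `P₁ ⊗_P P₂` realizes the fibered
coproduct if: its zero is `[(0,0)]`, its one is `[(1,1)]`, its multiplication
is given on classes by componentwise multiplication (in particular this
multiplication of equivalence classes is well-defined), its involution is
given by `-[(a,b)] = [(-a,b)] = [(a,-b)]` (in particular this involution is
well-defined), and its nullset is exactly `tensorNull`. -/
def TensorSpec (S : PastureStr P) (S₁ : PastureStr P₁) (S₂ : PastureStr P₂)
    (f₁ : P → P₁) (f₂ : P → P₂)
    (SQ : PastureStr (TensorCarrier S S₁ S₂ f₁ f₂)) : Prop :=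
  SQ.zero = Quot.mk (tensorRel S S₁ S₂ f₁ f₂) (S₁.zero, S₂.zero) ∧
  SQ.one = Quot.mk (tensorRel S S₁ S₂ f₁ f₂) (S₁.one, S₂.one) ∧
  (∀ (a : P₁) (b : P₂) (c : P₁) (d : P₂),
      SQ.mul (Quot.mk (tensorRel S S₁ S₂ f₁ f₂) (a, b))
          (Quot.mk (tensorRel S S₁ S₂ f₁ f₂) (c, d)) =
        Quot.mk (tensorRel S S₁ S₂ f₁ f₂) (S₁.mul a c, S₂.mul b d)) ∧
  (∀ (a : P₁) (b : P₂),
      SQ.neg (Quot.mk (tensorRel S S₁ S₂ f₁ f₂) (a, b)) =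
        Quot.mk (tensorRel S S₁ S₂ f₁ f₂) (S₁.neg a, b)) ∧
  (∀ (a : P₁) (b : P₂),
      SQ.neg (Quot.mk (tensorRel S S₁ S₂ f₁ f₂) (a, b)) =
        Quot.mk (tensorRel S S₁ S₂ f₁ f₂) (a, S₂.neg b)) ∧
  (∀ u v w, SQ.null u v w ↔ tensorNull S S₁ S₂ f₁ f₂ u v w)

/-- The canonical map `i₁ : P₁ → P₁ ⊗_P P₂`, `x ↦ [(x,1)]`
(note `[(0,1)] = [(0,0)]`, so `i₁ 0 = 0`). -/
def tensorInc₁ (S : PastureStr P) (S₁ : PastureStr P₁) (S₂ : PastureStr P₂)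
    (f₁ : P → P₁) (f₂ : P → P₂) : P₁ → TensorCarrier S S₁ S₂ f₁ f₂ := fun x =>
  Quot.mk (tensorRel S S₁ S₂ f₁ f₂) (x, S₂.one)

/-- The canonical map `i₂ : P₂ → P₁ ⊗_P P₂`, `y ↦ [(1,y)]`
(note `[(1,0)] = [(0,0)]`, so `i₂ 0 = 0`). -/
def tensorInc₂ (S : PastureStr P) (S₁ : PastureStr P₁) (S₂ : PastureStr P₂)
    (f₁ : P → P₁) (f₂ : P → P₂) : P₂ → TensorCarrier S S₁ S₂ f₁ f₂ := fun y =>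
  Quot.mk (tensorRel S S₁ S₂ f₁ f₂) (S₁.one, y)

namespace PastureStr.IsPasture

variable {Q : Type*} {T : PastureStr Q}

theorem mul_zero (hT : T.IsPasture) (a : Q) : T.mul a T.zero = T.zero := by
  rw [hT.mul_comm, hT.zero_mul]

theorem mul_one (hT : T.IsPasture) (a : Q) : T.mul a T.one = a := by
  rw [hT.mul_comm, hT.one_mul]

/-- Scale the relation `a + (-a) + 0 = 0` by `d` and read it back with `null_zero`. -/
theorem mul_neg (hT : T.IsPasture) (d a : Q) : T.mul d (T.neg a) = T.neg (T.mul d a) := by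
  have h : T.null a (T.neg a) T.zero := (hT.null_zero a (T.neg a)).2 (hT.neg_neg a).symm
  have hd := hT.null_mul d _ _ _ h
  rw [hT.mul_zero, hT.null_zero] at hd
  rw [hd, hT.neg_neg]

theorem neg_mul (hT : T.IsPasture) (a b : Q) : T.mul (T.neg a) b = T.neg (T.mul a b) := by
  rw [hT.mul_comm, hT.mul_neg, hT.mul_comm]

theorem mul_mul_mul_comm (hT : T.IsPasture) (a b c d : Q) :
    T.mul (T.mul a b) (T.mul c d) = T.mul (T.mul a c) (T.mul b d) := by
  rw [hT.mul_assoc, hT.mul_assoc, ← hT.mul_assoc b c d, hT.mul_comm b c, hT.mul_assoc c b d]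

end PastureStr.IsPasture

section FiberedCoproduct

variable {S : PastureStr P} {S₁ : PastureStr P₁} {S₂ : PastureStr P₂} {f₁ : P → P₁} {f₂ : P → P₂}
  {P' : Type v} {S' : PastureStr P'} {g₁ : P₁ → P'} {g₂ : P₂ → P'}

theorem tensorRel.mul_map_eq (hS' : S'.IsPasture) (hg₁ : S₁.IsHom S' g₁)
    (hg₂ : S₂.IsHom S' g₂) (hcomm : g₁ ∘ f₁ = g₂ ∘ f₂) {x y : P₁ × P₂}
    (h : tensorRel S S₁ S₂ f₁ f₂ x y) :
    S'.mul (g₁ x.1) (g₂ x.2) = S'.mul (g₁ y.1) (g₂ y.2) := by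
  have map_eq_zero : ∀ p : P₁ × P₂, (p.1 = S₁.zero ∨ p.2 = S₂.zero) →
      S'.mul (g₁ p.1) (g₂ p.2) = S'.zero := by
    rintro p (h | h)
    · rw [h, hg₁.map_zero, hS'.zero_mul]
    · rw [h, hg₂.map_zero, hS'.mul_zero]
  rcases h with ⟨hx, hy⟩ | ⟨z, -, hx, hy⟩
  · rw [map_eq_zero x hx, map_eq_zero y hy]
  · have hz : g₁ (f₁ z) = g₂ (f₂ z) := congrFun hcomm z
    rw [← hx, hy, hg₁.map_mul, hg₂.map_mul, hz, hS'.mul_comm (g₂ (f₂ z)), hS'.mul_assoc]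

theorem tensorInc₁_mul_tensorInc₂ (hS₁ : S₁.IsPasture) (hS₂ : S₂.IsPasture)
    {SQ : PastureStr (TensorCarrier S S₁ S₂ f₁ f₂)} (hSQ : TensorSpec S S₁ S₂ f₁ f₂ SQ)
    (a : P₁) (b : P₂) :
    SQ.mul (tensorInc₁ S S₁ S₂ f₁ f₂ a) (tensorInc₂ S S₁ S₂ f₁ f₂ b) = Quot.mk _ (a, b) := by
  rw [tensorInc₁, tensorInc₂, hSQ.2.2.1, hS₁.mul_one, hS₂.one_mul]

theorem TensorCarrier.hom_ext (hS₁ : S₁.IsPasture) (hS₂ : S₂.IsPasture)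
    {SQ : PastureStr (TensorCarrier S S₁ S₂ f₁ f₂)} (hSQ : TensorSpec S S₁ S₂ f₁ f₂ SQ)
    {g g' : TensorCarrier S S₁ S₂ f₁ f₂ → P'} (hg : SQ.IsHom S' g) (hg' : SQ.IsHom S' g')
    (h₁ : g ∘ tensorInc₁ S S₁ S₂ f₁ f₂ = g' ∘ tensorInc₁ S S₁ S₂ f₁ f₂)
    (h₂ : g ∘ tensorInc₂ S S₁ S₂ f₁ f₂ = g' ∘ tensorInc₂ S S₁ S₂ f₁ f₂) : g = g' := by
  funext u
  induction u using Quot.ind with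
  | mk p =>
    rw [← tensorInc₁_mul_tensorInc₂ hS₁ hS₂ hSQ, hg.map_mul, hg'.map_mul]
    exact congrArg₂ S'.mul (congrFun h₁ p.1) (congrFun h₂ p.2)

variable (S) in
def tensorLift (hS' : S'.IsPasture) (hg₁ : S₁.IsHom S' g₁) (hg₂ : S₂.IsHom S' g₂)
    (hcomm : g₁ ∘ f₁ = g₂ ∘ f₂) : TensorCarrier S S₁ S₂ f₁ f₂ → P' :=
  Quot.lift (fun p => S'.mul (g₁ p.1) (g₂ p.2)) fun _ _ h => h.mul_map_eq hS' hg₁ hg₂ hcomm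

variable (hS' : S'.IsPasture) (hg₁ : S₁.IsHom S' g₁) (hg₂ : S₂.IsHom S' g₂)
  (hcomm : g₁ ∘ f₁ = g₂ ∘ f₂)

@[simp]
theorem tensorLift_mk (a : P₁) (b : P₂) :
    tensorLift S hS' hg₁ hg₂ hcomm (Quot.mk _ (a, b)) = S'.mul (g₁ a) (g₂ b) :=
  rfl

theorem tensorLift_comp_tensorInc₁ :
    tensorLift S hS' hg₁ hg₂ hcomm ∘ tensorInc₁ S S₁ S₂ f₁ f₂ = g₁ := by
  funext a
  exact (congrArg _ hg₂.map_one).trans (hS'.mul_one _)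

theorem tensorLift_comp_tensorInc₂ :
    tensorLift S hS' hg₁ hg₂ hcomm ∘ tensorInc₂ S S₁ S₂ f₁ f₂ = g₂ := by
  funext b
  exact (congrArg (S'.mul · _) hg₁.map_one).trans (hS'.one_mul _)

theorem isHom_tensorLift {SQ : PastureStr (TensorCarrier S S₁ S₂ f₁ f₂)}
    (hSQ : TensorSpec S S₁ S₂ f₁ f₂ SQ) : SQ.IsHom S' (tensorLift S hS' hg₁ hg₂ hcomm) := by
  obtain ⟨hzero, hone, hmul, hneg, -, hnull⟩ := hSQ
  refine ⟨?_, ?_, ?_, ?_, ?_⟩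
  · rintro ⟨a, b⟩ ⟨c, d⟩
    rw [hmul, tensorLift_mk, tensorLift_mk, tensorLift_mk, hg₁.map_mul, hg₂.map_mul,
      hS'.mul_mul_mul_comm]
  · rw [hzero, tensorLift_mk, hg₁.map_zero, hS'.zero_mul]
  · rw [hone, tensorLift_mk, hg₁.map_one, hg₂.map_one, hS'.one_mul]
  · rintro ⟨a, b⟩
    rw [hneg, tensorLift_mk, tensorLift_mk, hg₁.map_neg, hS'.neg_mul]
  · intro u v w h
    rcases (hnull u v w).1 h with
      ⟨a, b, c, y, habc, rfl, rfl, rfl⟩ | ⟨x, a, b, c, habc, rfl, rfl, rfl⟩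
    · simp only [tensorLift_mk, hS'.mul_comm _ (g₂ y)]
      exact hS'.null_mul _ _ _ _ (hg₁.map_null a b c habc)
    · exact hS'.null_mul _ _ _ _ (hg₂.map_null a b c habc)

end FiberedCoproduct

theorem fibered_coproduct_universal_property_general
    (S : PastureStr P) (S₁ : PastureStr P₁) (S₂ : PastureStr P₂)
    (hS₁ : S₁.IsPasture) (hS₂ : S₂.IsPasture)
    (f₁ : P → P₁) (f₂ : P → P₂)
    (SQ : PastureStr (TensorCarrier S S₁ S₂ f₁ f₂))
    (hSQ : TensorSpec S S₁ S₂ f₁ f₂ SQ)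
    (P' : Type v) (S' : PastureStr P') (hS' : S'.IsPasture)
    (g₁ : P₁ → P') (g₂ : P₂ → P')
    (hg₁ : S₁.IsHom S' g₁) (hg₂ : S₂.IsHom S' g₂)
    (hcomm : g₁ ∘ f₁ = g₂ ∘ f₂) :
    ∃ g : TensorCarrier S S₁ S₂ f₁ f₂ → P',
      (PastureStr.IsHom SQ S' g ∧
        g ∘ tensorInc₁ S S₁ S₂ f₁ f₂ = g₁ ∧ g ∘ tensorInc₂ S S₁ S₂ f₁ f₂ = g₂ ∧
        ∀ (a : P₁) (b : P₂),
          g (Quot.mk (tensorRel S S₁ S₂ f₁ f₂) (a, b)) = S'.mul (g₁ a) (g₂ b)) ∧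
      ∀ g' : TensorCarrier S S₁ S₂ f₁ f₂ → P',
        (PastureStr.IsHom SQ S' g' ∧
          g' ∘ tensorInc₁ S S₁ S₂ f₁ f₂ = g₁ ∧ g' ∘ tensorInc₂ S S₁ S₂ f₁ f₂ = g₂) →
        g' = g := by
  refine ⟨tensorLift S hS' hg₁ hg₂ hcomm,
    ⟨isHom_tensorLift hS' hg₁ hg₂ hcomm hSQ, tensorLift_comp_tensorInc₁ hS' hg₁ hg₂ hcomm,
      tensorLift_comp_tensorInc₂ hS' hg₁ hg₂ hcomm, tensorLift_mk hS' hg₁ hg₂ hcomm⟩, ?_⟩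
  rintro g' ⟨hg', hg'₁, hg'₂⟩
  refine TensorCarrier.hom_ext hS₁ hS₂ hSQ hg' (isHom_tensorLift hS' hg₁ hg₂ hcomm hSQ) ?_ ?_
  · rw [hg'₁, tensorLift_comp_tensorInc₁]
  · rw [hg'₂, tensorLift_comp_tensorInc₂]

/-- **The fibered coproduct of pastures satisfies the universal property of
the fibered coproduct**: for any pasture structure realizing `P₁ ⊗_P P₂` and
any pasture `P'` with morphisms `g₁ : P₁ → P'`, `g₂ : P₂ → P'` satisfying
`g₁ ∘ f₁ = g₂ ∘ f₂`, there is a unique morphism `g : P₁ ⊗_P P₂ → P'` with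
`g ∘ i₁ = g₁` and `g ∘ i₂ = g₂`; explicitly, `g [(a,b)] = g₁ a · g₂ b`. -/
theorem fibered_coproduct_universal_property
    (S : PastureStr P) (S₁ : PastureStr P₁) (S₂ : PastureStr P₂)
    (hS : S.IsPasture) (hS₁ : S₁.IsPasture) (hS₂ : S₂.IsPasture)
    (f₁ : P → P₁) (f₂ : P → P₂) (hf₁ : S.IsHom S₁ f₁) (hf₂ : S.IsHom S₂ f₂)
    (SQ : PastureStr (TensorCarrier S S₁ S₂ f₁ f₂))
    (hSQ : TensorSpec S S₁ S₂ f₁ f₂ SQ) (hSQP : SQ.IsPasture)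
    (P' : Type v) (S' : PastureStr P') (hS' : S'.IsPasture)
    (g₁ : P₁ → P') (g₂ : P₂ → P')
    (hg₁ : S₁.IsHom S' g₁) (hg₂ : S₂.IsHom S' g₂)
    (hcomm : g₁ ∘ f₁ = g₂ ∘ f₂) :
    ∃ g : TensorCarrier S S₁ S₂ f₁ f₂ → P',
      (PastureStr.IsHom SQ S' g ∧
        g ∘ tensorInc₁ S S₁ S₂ f₁ f₂ = g₁ ∧ g ∘ tensorInc₂ S S₁ S₂ f₁ f₂ = g₂ ∧
        ∀ (a : P₁) (b : P₂),
          g (Quot.mk (tensorRel S S₁ S₂ f₁ f₂) (a, b)) = S'.mul (g₁ a) (g₂ b)) ∧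
      ∀ g' : TensorCarrier S S₁ S₂ f₁ f₂ → P',
        (PastureStr.IsHom SQ S' g' ∧
          g' ∘ tensorInc₁ S S₁ S₂ f₁ f₂ = g₁ ∧ g' ∘ tensorInc₂ S S₁ S₂ f₁ f₂ = g₂) →
        g' = g :=
  fibered_coproduct_universal_property_general S S₁ S₂ hS₁ hS₂ f₁ f₂ SQ hSQ P' S' hS' g₁ g₂ hg₁ hg₂
    hcomm
end

section
/- Given pastures P₁, P₂ and morphisms of pastures f, g : P₁ → P₂, the coequalizer Q = {0} ∪ (P₂^×/∼), where x ∼ y iff xy⁻¹ = f(z)g(z)⁻¹ for some z ∈ P₁^×, is a pasture: multiplication of classes is well-defined and makes Q^× an abelian group, the involution -[x] = [-x] is well-defined, and the nullset ([a],[b],[c]) with a'+b'+c'=0 in P₂ for some representatives a' ∈ [a], b' ∈ [b], c' ∈ [c] satisfies the three axioms of a nullset; moreover the quotient map q : P₂ → Q, q(x) = [x], q(0) = 0, is a morphism of pastures. -/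
universe u v w

variable {P₁ P₂ : Type u}

/-- The relation on `P₂^×` defining the coequalizer of `f, g : P₁ → P₂`:
`x ∼ y` iff `x y⁻¹ = f(z) g(z)⁻¹` for some `z ∈ P₁^×` (expressed here as
`x · g(z) = f(z) · y`). -/
def coeqRel (S₁ : PastureStr P₁) (S₂ : PastureStr P₂) (f g : P₁ → P₂) :
    {x : P₂ // x ≠ S₂.zero} → {x : P₂ // x ≠ S₂.zero} → Prop := fun x y =>
  ∃ z : P₁, z ≠ S₁.zero ∧ S₂.mul x.1 (g z) = S₂.mul (f z) y.1

/-- The underlying set of the coequalizer of `f, g : P₁ → P₂`: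
`{0} ∪ (P₂^× / ∼)`, with `none` playing the role of `0`. -/
def CoeqCarrier (S₁ : PastureStr P₁) (S₂ : PastureStr P₂) (f g : P₁ → P₂) :
    Type u :=
  Option (Quot (coeqRel S₁ S₂ f g))

open Classical in
/-- The quotient map `q : P₂ → Q = {0} ∪ (P₂^× / ∼)`, sending `0` to `0` and
a nonzero `x` to its class `[x]`. -/
noncomputable def coeqMap (S₁ : PastureStr P₁) (S₂ : PastureStr P₂)
    (f g : P₁ → P₂) : P₂ → CoeqCarrier S₁ S₂ f g := fun x =>
  if h : x = S₂.zero then none else some (Quot.mk (coeqRel S₁ S₂ f g) ⟨x, h⟩)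

/-- A pasture structure `SQ` on `Q = {0} ∪ (P₂^× / ∼)` realizes the
coequalizer if: its zero is `0`, its one is `[1]`, its multiplication
satisfies `[x] · [y] = [xy]` (in particular multiplication of classes is
well-defined), its involution satisfies `-[x] = [-x]` (in particular it is
well-defined), and its nullset consists of the triples `([a],[b],[c])` such
that some representatives satisfy `a' + b' + c' = 0` in `P₂`. -/
def CoeqSpec (S₁ : PastureStr P₁) (S₂ : PastureStr P₂) (f g : P₁ → P₂)
    (SQ : PastureStr (CoeqCarrier S₁ S₂ f g)) : Prop :=
  SQ.zero = none ∧
  SQ.one = coeqMap S₁ S₂ f g S₂.one ∧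
  (∀ x y : P₂, SQ.mul (coeqMap S₁ S₂ f g x) (coeqMap S₁ S₂ f g y) =
      coeqMap S₁ S₂ f g (S₂.mul x y)) ∧
  (∀ x : P₂, SQ.neg (coeqMap S₁ S₂ f g x) = coeqMap S₁ S₂ f g (S₂.neg x)) ∧
  (∀ u v w : CoeqCarrier S₁ S₂ f g, SQ.null u v w ↔
      ∃ a b c : P₂, S₂.null a b c ∧
        coeqMap S₁ S₂ f g a = u ∧ coeqMap S₁ S₂ f g b = v ∧
        coeqMap S₁ S₂ f g c = w)

/-!
The multiplicative relation `x · g(z) = f(z) · y` is compatible with multiplication by a fixed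
element and with the involution, so both descend to the classes; the nullset of `Q` is by
definition the image of that of `P₂`. Every pasture axiom is then transported along the
surjection `q : P₂ → Q`, whose fibre over `0` is `{0}`.
-/

namespace PastureStr

namespace IsPasture

variable {P : Type u} {S : PastureStr P}

lemma mul_zero_s14 (hS : S.IsPasture) (a : P) : S.mul a S.zero = S.zero := by
  rw [hS.mul_comm, hS.zero_mul]

lemma mul_neg_s14 (hS : S.IsPasture) (d a : P) : S.mul d (S.neg a) = S.neg (S.mul d a) := by
  have h : S.null a (S.neg a) S.zero := (hS.null_zero _ _).2 (hS.neg_neg a).symm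
  have hd := hS.null_mul d _ _ _ h
  rw [hS.mul_zero_s14] at hd
  exact (hS.null_zero _ _).1 (hS.null_swap_left _ _ _ hd)

lemma neg_ne_zero (hS : S.IsPasture) {a : P} (ha : a ≠ S.zero) : S.neg a ≠ S.zero := fun h =>
  ha (by rw [← hS.neg_neg a, h, hS.neg_zero])

end IsPasture

structure IsImage {P : Type u} {Q : Type v} (S : PastureStr P) (T : PastureStr Q)
    (q : P → Q) : Prop where
  surjective : Function.Surjective q
  map_mul : ∀ a b : P, q (S.mul a b) = T.mul (q a) (q b)
  map_one : q S.one = T.one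
  map_neg : ∀ a : P, q (S.neg a) = T.neg (q a)
  map_eq_zero_iff : ∀ a : P, q a = T.zero ↔ a = S.zero
  null_iff : ∀ u v w : Q,
    T.null u v w ↔ ∃ a b c : P, S.null a b c ∧ q a = u ∧ q b = v ∧ q c = w

namespace IsImage

variable {P : Type u} {Q : Type v} {S : PastureStr P} {T : PastureStr Q} {q : P → Q}

lemma map_zero (hq : IsImage S T q) : q S.zero = T.zero :=
  (hq.map_eq_zero_iff _).2 rfl

lemma ne_zero_of_map_ne_zero (hq : IsImage S T q) {a : P} (ha : q a ≠ T.zero) : a ≠ S.zero :=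
  fun h => ha ((hq.map_eq_zero_iff a).2 h)

lemma isHom (hq : IsImage S T q) : S.IsHom T q where
  map_mul := hq.map_mul
  map_zero := hq.map_zero
  map_one := hq.map_one
  map_neg := hq.map_neg
  map_null a b c h := (hq.null_iff _ _ _).2 ⟨a, b, c, h, rfl, rfl, rfl⟩

lemma null_zero_iff (hS : S.IsPasture) (hq : IsImage S T q) (u v : Q) :
    T.null u v T.zero ↔ u = T.neg v := by
  rw [hq.null_iff]
  constructor
  · rintro ⟨a, b, c, habc, rfl, rfl, hc⟩
    obtain rfl := (hq.map_eq_zero_iff c).1 hc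
    rw [(hS.null_zero a b).1 habc, hq.map_neg]
  · rintro rfl
    obtain ⟨b, rfl⟩ := hq.surjective v
    exact ⟨S.neg b, b, S.zero, (hS.null_zero _ _).2 rfl, hq.map_neg b, rfl, hq.map_zero⟩

lemma isPasture (hS : S.IsPasture) (hq : IsImage S T q) : T.IsPasture where
  mul_comm := hq.surjective.forall₂.2 fun a b => by
    rw [← hq.map_mul, ← hq.map_mul, hS.mul_comm]
  mul_assoc := hq.surjective.forall₃.2 fun a b c => by
    simp only [← hq.map_mul, hS.mul_assoc]
  one_mul := hq.surjective.forall.2 fun a => by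
    rw [← hq.map_one, ← hq.map_mul, hS.one_mul]
  zero_mul := hq.surjective.forall.2 fun a => by
    rw [← hq.map_zero, ← hq.map_mul, hS.zero_mul]
  one_ne_zero := by
    rw [← hq.map_one, Ne, hq.map_eq_zero_iff]
    exact hS.one_ne_zero
  mul_ne_zero := hq.surjective.forall₂.2 fun a b ha hb => by
    rw [← hq.map_mul, Ne, hq.map_eq_zero_iff]
    exact hS.mul_ne_zero a b (hq.ne_zero_of_map_ne_zero ha) (hq.ne_zero_of_map_ne_zero hb)
  exists_inv := hq.surjective.forall.2 fun a ha => by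
    obtain ⟨b, hab⟩ := hS.exists_inv a (hq.ne_zero_of_map_ne_zero ha)
    exact ⟨q b, by rw [← hq.map_mul, hab, hq.map_one]⟩
  neg_neg := hq.surjective.forall.2 fun a => by
    rw [← hq.map_neg, ← hq.map_neg, hS.neg_neg]
  neg_zero := by
    rw [← hq.map_zero, ← hq.map_neg, hS.neg_zero]
  null_swap_left u v w := by
    simp only [hq.null_iff]
    rintro ⟨a, b, c, h, ha, hb, hc⟩
    exact ⟨b, a, c, hS.null_swap_left _ _ _ h, hb, ha, hc⟩
  null_swap_right u v w := by
    simp only [hq.null_iff]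
    rintro ⟨a, b, c, h, ha, hb, hc⟩
    exact ⟨a, c, b, hS.null_swap_right _ _ _ h, ha, hc, hb⟩
  null_mul := hq.surjective.forall.2 fun d u v w => by
    simp only [hq.null_iff]
    rintro ⟨a, b, c, h, rfl, rfl, rfl⟩
    exact ⟨_, _, _, hS.null_mul d a b c h, hq.map_mul d a, hq.map_mul d b, hq.map_mul d c⟩
  null_zero := hq.null_zero_iff hS

end IsImage

end PastureStr

section Coequalizer

variable (S₁ : PastureStr P₁) {S₂ : PastureStr P₂} (f g : P₁ → P₂)
  (hS₂ : S₂.IsPasture)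

def coeqMul : Quot (coeqRel S₁ S₂ f g) → Quot (coeqRel S₁ S₂ f g) →
    Quot (coeqRel S₁ S₂ f g) :=
  Quot.map₂ (fun a b => ⟨S₂.mul a.1 b.1, hS₂.mul_ne_zero _ _ a.2 b.2⟩)
    (fun a _ _ ⟨z, hz, h⟩ => ⟨z, hz, by
      rw [hS₂.mul_assoc, h, ← hS₂.mul_assoc, hS₂.mul_comm a.1 (f z), hS₂.mul_assoc]⟩)
    (fun _ _ b ⟨z, hz, h⟩ => ⟨z, hz, by
      rw [hS₂.mul_assoc, hS₂.mul_comm b.1 (g z), ← hS₂.mul_assoc, h, hS₂.mul_assoc]⟩)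

def coeqNeg : Quot (coeqRel S₁ S₂ f g) → Quot (coeqRel S₁ S₂ f g) :=
  Quot.map (fun a => ⟨S₂.neg a.1, hS₂.neg_ne_zero a.2⟩)
    (fun a _ ⟨z, hz, h⟩ => ⟨z, hz, by
      rw [hS₂.mul_comm, hS₂.mul_neg_s14, hS₂.mul_comm (g z), h, hS₂.mul_neg_s14]⟩)

noncomputable def coeqPastureStr : PastureStr (CoeqCarrier S₁ S₂ f g) where
  mul := Option.map₂ (coeqMul S₁ f g hS₂)
  zero := none
  one := coeqMap S₁ S₂ f g S₂.one
  neg := Option.map (coeqNeg S₁ f g hS₂)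
  null u v w := ∃ a b c : P₂, S₂.null a b c ∧
    coeqMap S₁ S₂ f g a = u ∧ coeqMap S₁ S₂ f g b = v ∧ coeqMap S₁ S₂ f g c = w

lemma coeqMap_of_ne_zero {x : P₂} (hx : x ≠ S₂.zero) :
    coeqMap S₁ S₂ f g x = some (Quot.mk _ ⟨x, hx⟩) :=
  dif_neg hx

lemma coeqMap_eq_none_iff (x : P₂) : coeqMap S₁ S₂ f g x = none ↔ x = S₂.zero := by
  by_cases hx : x = S₂.zero
  · exact iff_of_true (dif_pos hx) hx
  · simp only [coeqMap_of_ne_zero S₁ f g hx, reduceCtorEq, hx]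

lemma coeqMap_zero : coeqMap S₁ S₂ f g S₂.zero = none :=
  (coeqMap_eq_none_iff S₁ f g _).2 rfl

lemma coeqMap_surjective : Function.Surjective (coeqMap S₁ S₂ f g) := by
  rintro (_ | t)
  · exact ⟨S₂.zero, coeqMap_zero S₁ f g⟩
  · obtain ⟨a, rfl⟩ := Quot.exists_rep t
    exact ⟨a.1, coeqMap_of_ne_zero S₁ f g a.2⟩

lemma coeqMap_mul (x y : P₂) :
    (coeqPastureStr S₁ f g hS₂).mul (coeqMap S₁ S₂ f g x) (coeqMap S₁ S₂ f g y) =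
      coeqMap S₁ S₂ f g (S₂.mul x y) := by
  by_cases hx : x = S₂.zero
  · rw [hx, hS₂.zero_mul, coeqMap_zero]
    rfl
  by_cases hy : y = S₂.zero
  · rw [hy, hS₂.mul_zero_s14, coeqMap_zero]
    exact Option.map₂_none_right _ _
  rw [coeqMap_of_ne_zero S₁ f g hx, coeqMap_of_ne_zero S₁ f g hy,
    coeqMap_of_ne_zero S₁ f g (hS₂.mul_ne_zero _ _ hx hy)]
  rfl

lemma coeqMap_neg (x : P₂) :
    (coeqPastureStr S₁ f g hS₂).neg (coeqMap S₁ S₂ f g x) =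
      coeqMap S₁ S₂ f g (S₂.neg x) := by
  by_cases hx : x = S₂.zero
  · rw [hx, hS₂.neg_zero, coeqMap_zero]
    rfl
  rw [coeqMap_of_ne_zero S₁ f g hx, coeqMap_of_ne_zero S₁ f g (hS₂.neg_ne_zero hx)]
  rfl

lemma coeqSpec_coeqPastureStr :
    CoeqSpec S₁ S₂ f g (coeqPastureStr S₁ f g hS₂) :=
  ⟨rfl, rfl, coeqMap_mul S₁ f g hS₂, coeqMap_neg S₁ f g hS₂, fun _ _ _ => Iff.rfl⟩

lemma isImage_coeqMap :
    S₂.IsImage (coeqPastureStr S₁ f g hS₂) (coeqMap S₁ S₂ f g) where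
  surjective := coeqMap_surjective S₁ f g
  map_mul x y := (coeqMap_mul S₁ f g hS₂ x y).symm
  map_one := rfl
  map_neg x := (coeqMap_neg S₁ f g hS₂ x).symm
  map_eq_zero_iff := coeqMap_eq_none_iff S₁ f g
  null_iff _ _ _ := Iff.rfl

end Coequalizer

theorem coequalizer_is_pasture_general
    (S₁ : PastureStr P₁) (S₂ : PastureStr P₂)
    (hS₂ : S₂.IsPasture)
    (f g : P₁ → P₂) :
    ∃ SQ : PastureStr (CoeqCarrier S₁ S₂ f g),
      CoeqSpec S₁ S₂ f g SQ ∧ SQ.IsPasture ∧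
      PastureStr.IsHom S₂ SQ (coeqMap S₁ S₂ f g) :=
  ⟨coeqPastureStr S₁ f g hS₂, coeqSpec_coeqPastureStr S₁ f g hS₂,
    (isImage_coeqMap S₁ f g hS₂).isPasture hS₂, (isImage_coeqMap S₁ f g hS₂).isHom⟩

/-- **The coequalizer of two morphisms of pastures is a pasture**, and the
quotient map `q : P₂ → Q` is a morphism of pastures. -/
theorem coequalizer_is_pasture
    (S₁ : PastureStr P₁) (S₂ : PastureStr P₂)
    (hS₁ : S₁.IsPasture) (hS₂ : S₂.IsPasture)
    (f g : P₁ → P₂) (hf : S₁.IsHom S₂ f) (hg : S₁.IsHom S₂ g) :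
    ∃ SQ : PastureStr (CoeqCarrier S₁ S₂ f g),
      CoeqSpec S₁ S₂ f g SQ ∧ SQ.IsPasture ∧
      PastureStr.IsHom S₂ SQ (coeqMap S₁ S₂ f g) :=
  coequalizer_is_pasture_general S₁ S₂ hS₂ f g
end
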